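/- Let (X, a, *, e) be a monoidal V-category, i.e., a V-category with a V-functor * : X ⊠ X → X and unit element e making (X, *, e) a monoid, where X ⊠ X carries the structure (a ⊗ a)((x,y),(x',y')) = a(x,x') ⊗ a(y,y'). Define â : LX × X → V by â(x̲, y) = a(x₁ * ... * xₙ, y) (with empty product e). Then (X, â) is an (L,V)-category: e_X° ≤ â and â • â ≤ â. -/

import Mathlib

/-!
Functoriality of `*` gives `La(x̲, y̲) ≤ a(∏x̲, ∏y̲)`, and the product of a flattened list of lists
is the product of the partial products; hence `(Lâ ∘ m°)(x̲, y̲) ≤ a(∏x̲, ∏y̲)`, and `â • â ≤ â`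
follows from transitivity of `a`.
-/

variable {V : Type*} [CommMonoid V] [CompleteLattice V]

/-- The extension of the list monad to `V`-relations. -/
def Lrel {X Y : Type*} (r : X → Y → V) : List X → List Y → V
  | [], [] => 1
  | x :: xs, y :: ys => r x y * Lrel r xs ys
  | [], _ :: _ => ⊥
  | _ :: _, [] => ⊥

/-- The `V`-relation `Lb ∘ m_X° : LX ⇸ LX`. -/
def freeStr {X : Type*} (b : List X → X → V) : List X → List X → V :=
  fun xs ys => ⨆ l : List (List X), (⨆ _ : l.flatten = xs, (1 : V)) * Lrel b l ys

section Monoid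

variable {X : Type*} {mul : X → X → X} {e : X}

theorem foldr_eq_mul_foldr (hassoc : ∀ x y z : X, mul (mul x y) z = mul x (mul y z))
    (hel : ∀ x : X, mul e x = x) (l : List X) (c : X) :
    l.foldr mul c = mul (l.foldr mul e) c := by
  simpa [hel] using @List.foldr_assoc _ mul ⟨hassoc⟩ l e c

theorem foldr_flatten_eq_foldr_map (hassoc : ∀ x y z : X, mul (mul x y) z = mul x (mul y z))
    (hel : ∀ x : X, mul e x = x) (ls : List (List X)) :
    ls.flatten.foldr mul e = (ls.map (List.foldr mul e)).foldr mul e := by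
  rw [List.foldr_flatten, List.foldr_map]
  exact congrArg (ls.foldr · e) (funext₂ (foldr_eq_mul_foldr hassoc hel))

end Monoid

theorem Lrel_comp_left {X Y Z : Type*} (r : Y → Z → V) (f : X → Y) :
    ∀ (xs : List X) (zs : List Z), Lrel (fun x z => r (f x) z) xs zs = Lrel r (xs.map f) zs
  | [], [] | [], _ :: _ | _ :: _, [] => rfl
  | x :: xs, z :: zs => congrArg (r (f x) z * ·) (Lrel_comp_left r f xs zs)

theorem Lrel_le_foldr [MulLeftMono V] {X : Type*} (a : X → X → V) {mul : X → X → X} {e : X}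
    (he : (1 : V) ≤ a e e)
    (hfun : ∀ x x' y y' : X, a x x' * a y y' ≤ a (mul x y) (mul x' y')) :
    ∀ xs ys : List X, Lrel a xs ys ≤ a (xs.foldr mul e) (ys.foldr mul e)
  | [], [] => he
  | [], _ :: _ | _ :: _, [] => bot_le
  | _ :: xs, _ :: ys =>
    (mul_le_mul' le_rfl (Lrel_le_foldr a he hfun xs ys)).trans (hfun _ _ _ _)

theorem freeStr_le_foldr [IsQuantale V] {X : Type*} (a : X → X → V) {mul : X → X → X} {e : X}
    (he : (1 : V) ≤ a e e)
    (hassoc : ∀ x y z : X, mul (mul x y) z = mul x (mul y z)) (hel : ∀ x : X, mul e x = x)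
    (hfun : ∀ x x' y y' : X, a x x' * a y y' ≤ a (mul x y) (mul x' y')) (xs zs : List X) :
    freeStr (fun l x => a (l.foldr mul e) x) xs zs ≤ a (xs.foldr mul e) (zs.foldr mul e) := by
  refine iSup_le fun ls => ?_
  by_cases h : ls.flatten = xs
  · subst h
    rw [iSup_pos rfl, one_mul, Lrel_comp_left, foldr_flatten_eq_foldr_map hassoc hel]
    exact Lrel_le_foldr a he hfun _ _
  · rw [iSup_neg h, Quantale.bot_mul]
    exact bot_le

/-- A monoidal `V`-category `(X, a, *, e)` gives a representable `(L,V)`-category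
with structure `â(x̲, y) = a(x₁ * ... * xₙ, y)` (empty product `e`). -/
theorem monoidal_vcat_representable
    [IsQuantale V] {X : Type*}
    (a : X → X → V)
    (ha_refl : ∀ x : X, (1 : V) ≤ a x x)
    (ha_trans : ∀ x y z : X, a x y * a y z ≤ a x z)
    (mul : X → X → X) (e : X)
    (hassoc : ∀ x y z : X, mul (mul x y) z = mul x (mul y z))
    (hel : ∀ x : X, mul e x = x) (her : ∀ x : X, mul x e = x)
    -- * : X ⊠ X → X is a V-functor
    (hfun : ∀ x x' y y' : X, a x x' * a y y' ≤ a (mul x y) (mul x' y')) :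
    -- e_X° ≤ â
    (∀ (xs : List X) (y : X),
        (⨆ _ : xs = [y], (1 : V)) ≤ a (xs.foldr mul e) y) ∧
    -- â • â ≤ â
    (∀ (xs : List X) (y : X),
        (⨆ zs : List X,
            freeStr (fun l x => a (l.foldr mul e) x) xs zs *
              a (zs.foldr mul e) y) ≤ a (xs.foldr mul e) y) := by
  refine ⟨fun xs y => iSup_le ?_, fun xs y => iSup_le fun zs => ?_⟩
  · rintro rfl
    simpa [her] using ha_refl y
  · exact (mul_le_mul' (freeStr_le_foldr a (ha_refl e) hassoc hel hfun xs zs) le_rfl).trans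
      (ha_trans _ _ _)
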